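/- Let W be an n×n positive definite Hermitian complex matrix with tr W = 1, let λ_max be its largest eigenvalue, and set q_k = (√W)_{kk} / tr √W. Then for every n×n unitary matrix U, Σ_{k=1}^n |(U √W)_{kk}|² ≤ (tr √W)² / n + √(n·λ_max) · Σ_{k=1}^n |q_k − 1/n|. -/

import Mathlib

/-!
Write `S = √W`, `aₖ = (U S Uᴴ)ₖₖ` and `sₖ = Sₖₖ`. Cauchy–Schwarz for the positive semidefinite
form `⟨x, S y⟩` gives `|(U S)ₖₖ|² ≤ aₖ sₖ`. The `aₖ` are nonnegative, sum to `tr S`, and are at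
most `√λ_max` because `(U S Uᴴ)(U S Uᴴ)ᴴ = U W Uᴴ ≤ λ_max`. Hence
`∑ aₖ sₖ ≤ (tr S)²/n + √λ_max ∑ |sₖ - tr S/n|`, and `∑ |sₖ - tr S/n| = tr S ∑ |qₖ - 1/n|`
with `tr S ≤ √n`, since `(tr S)² ≤ n tr (S Sᴴ) = n tr W = n`.
-/

open Matrix BigOperators
open scoped ComplexOrder

noncomputable def Matrix.PosSemidef.sqrt {n : Type*} [Fintype n] [DecidableEq n]
    {A : Matrix n n ℂ} (hA : A.PosSemidef) : Matrix n n ℂ :=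
  (hA.isHermitian.eigenvectorUnitary : Matrix n n ℂ) *
    diagonal (fun i => ((√(hA.isHermitian.eigenvalues i) : ℝ) : ℂ)) *
    (star hA.isHermitian.eigenvectorUnitary : Matrix n n ℂ)

namespace Matrix.PosSemidef

variable {n : Type*} [Fintype n] [DecidableEq n] {A : Matrix n n ℂ} (hA : A.PosSemidef)

theorem posSemidef_sqrt : hA.sqrt.PosSemidef := by
  rw [PosSemidef.sqrt, star_eq_conjTranspose]
  exact (PosSemidef.diagonal fun i => Complex.zero_le_real.mpr (Real.sqrt_nonneg _))
    |>.mul_mul_conjTranspose_same _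

theorem sqrt_mul_self : hA.sqrt * hA.sqrt = A := by
  set V : Matrix n n ℂ := (hA.isHermitian.eigenvectorUnitary : Matrix n n ℂ)
  have hV : star V * V = 1 := Unitary.coe_star_mul_self _
  have hD : diagonal (fun i => ((√(hA.isHermitian.eigenvalues i) : ℝ) : ℂ)) *
      diagonal (fun i => ((√(hA.isHermitian.eigenvalues i) : ℝ) : ℂ)) =
      diagonal (RCLike.ofReal ∘ hA.isHermitian.eigenvalues) := by
    rw [diagonal_mul_diagonal]
    congr 1 with i
    rw [← Complex.ofReal_mul, Real.mul_self_sqrt (hA.eigenvalues_nonneg i)]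
    rfl
  conv_rhs => rw [hA.isHermitian.spectral_theorem, Unitary.conjStarAlgAut_apply, ← hD]
  simp only [PosSemidef.sqrt, mul_assoc]
  rw [← mul_assoc (star V), hV, one_mul]

end Matrix.PosSemidef

open scoped MatrixOrder

theorem Finset.sum_mul_le_sum_mul_add_mul_sum_abs_sub {ι : Type*} (s : Finset ι) (a b : ι → ℝ)
    {c : ℝ} (m : ℝ) (ha : ∀ i ∈ s, 0 ≤ a i ∧ a i ≤ c) :
    ∑ i ∈ s, a i * b i ≤ (∑ i ∈ s, a i) * m + c * ∑ i ∈ s, |b i - m| := by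
  rw [Finset.sum_mul, Finset.mul_sum, ← Finset.sum_add_distrib]
  refine Finset.sum_le_sum fun i hi => ?_
  obtain ⟨ha₀, hac⟩ := ha i hi
  have : a i * (b i - m) ≤ c * |b i - m| :=
    (mul_le_mul_of_nonneg_left (le_abs_self _) ha₀).trans
      (mul_le_mul_of_nonneg_right hac (abs_nonneg _))
  linarith

namespace Matrix

variable {m n 𝕜 : Type*} [Fintype n] [RCLike 𝕜]

theorem re_mul_conjTranspose_apply_self (M : Matrix m n 𝕜) (i : m) :
    RCLike.re ((M * Mᴴ) i i) = ∑ j, ‖M i j‖ ^ 2 := by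
  simp only [mul_apply, conjTranspose_apply, RCLike.star_def, RCLike.mul_conj, map_sum]
  norm_cast

theorem re_apply_sq_le_re_mul_conjTranspose_apply (M : Matrix n n 𝕜) (i : n) :
    RCLike.re (M i i) ^ 2 ≤ RCLike.re ((M * Mᴴ) i i) := by
  rw [re_mul_conjTranspose_apply_self]
  calc RCLike.re (M i i) ^ 2 ≤ ‖M i i‖ ^ 2 := by
        rw [← sq_abs]; exact pow_le_pow_left₀ (abs_nonneg _) (RCLike.abs_re_le_norm _) 2
    _ ≤ ∑ j, ‖M i j‖ ^ 2 :=
        Finset.single_le_sum (f := fun j => ‖M i j‖ ^ 2) (fun _ _ => by positivity)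
          (Finset.mem_univ i)

theorem re_trace_sq_le_card_mul_re_trace_mul_conjTranspose (M : Matrix n n 𝕜) :
    RCLike.re M.trace ^ 2 ≤ Fintype.card n * RCLike.re (M * Mᴴ).trace := by
  simp only [trace, diag_apply, map_sum]
  calc (∑ i, RCLike.re (M i i)) ^ 2 ≤ Fintype.card n * ∑ i, RCLike.re (M i i) ^ 2 :=
        sq_sum_le_card_mul_sum_sq
    _ ≤ Fintype.card n * ∑ i, RCLike.re ((M * Mᴴ) i i) := by
        gcongr with i
        exact re_apply_sq_le_re_mul_conjTranspose_apply M i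

theorem PosSemidef.norm_dotProduct_mulVec_sq_le {A : Matrix n n 𝕜} (hA : A.PosSemidef)
    (x y : n → 𝕜) :
    ‖star x ⬝ᵥ A *ᵥ y‖ ^ 2 ≤ RCLike.re (star x ⬝ᵥ A *ᵥ x) * RCLike.re (star y ⬝ᵥ A *ᵥ y) := by
  let _ := A.toSeminormedAddCommGroup hA
  let _ := A.toInnerProductSpace hA
  have := inner_mul_inner_self_le (𝕜 := 𝕜) x y
  rw [norm_inner_symm y x, ← sq] at this
  simp only [dotProduct_comm (star _)]
  exact this

theorem PosSemidef.norm_mul_apply_self_sq_le [DecidableEq n] {A : Matrix n n 𝕜}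
    (hA : A.PosSemidef) (B : Matrix n n 𝕜) (k : n) :
    ‖(B * A) k k‖ ^ 2 ≤ RCLike.re ((B * A * Bᴴ) k k) * RCLike.re (A k k) := by
  have hBA : B k ⬝ᵥ A *ᵥ Pi.single k 1 = (B * A) k k := by
    simp [mul_apply, dotProduct, mulVec, Pi.single_apply]
  have hBAB : B k ⬝ᵥ A *ᵥ star (B k) = (B * A * Bᴴ) k k := by
    rw [dotProduct_mulVec]
    simp [mul_apply, dotProduct, vecMul]
  have := hA.norm_dotProduct_mulVec_sq_le (star (B k)) (Pi.single k 1)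
  rw [star_star, hBA, hBAB] at this
  simpa using this

theorem IsHermitian.re_conj_apply_le_of_eigenvalues_le [DecidableEq n] {A : Matrix n n 𝕜}
    (hA : A.IsHermitian) {c : ℝ} (hc : ∀ i, hA.eigenvalues i ≤ c) {V : Matrix n n 𝕜}
    (hV : V * Vᴴ = 1) (k : n) :
    RCLike.re ((V * A * Vᴴ) k k) ≤ c := by
  have hA_le : A ≤ algebraMap ℝ (Matrix n n 𝕜) c := by
    refine le_algebraMap_of_spectrum_le ?_ hA.isSelfAdjoint
    rw [hA.spectrum_real_eq_range_eigenvalues]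
    rintro _ ⟨i, rfl⟩
    exact hc i
  have hconj : (V * (algebraMap ℝ (Matrix n n 𝕜) c - A) * Vᴴ).PosSemidef :=
    hA_le.mul_mul_conjTranspose_same V
  have hdiag := hconj.diag_nonneg (i := k)
  rw [Algebra.algebraMap_eq_smul_one, mul_sub, sub_mul, mul_smul_comm, smul_mul_assoc, mul_one,
    hV] at hdiag
  simpa [RCLike.smul_re] using (RCLike.nonneg_iff.mp hdiag).1

theorem IsHermitian.re_conj_apply_le_sqrt [DecidableEq n] {W : Matrix n n 𝕜}
    (hW : W.IsHermitian) {c : ℝ} (hc : ∀ i, hW.eigenvalues i ≤ c) {S U : Matrix n n 𝕜}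
    (hSW : S * Sᴴ = W) (hU : Uᴴ * U = 1) (hU' : U * Uᴴ = 1) (k : n) :
    RCLike.re ((U * S * Uᴴ) k k) ≤ √c := by
  have hUSU : U * S * Uᴴ * (U * S * Uᴴ)ᴴ = U * W * Uᴴ := by
    simp only [← hSW, conjTranspose_mul, conjTranspose_conjTranspose, mul_assoc]
    rw [← mul_assoc Uᴴ U, hU, one_mul]
  refine Real.le_sqrt_of_sq_le ?_
  calc RCLike.re ((U * S * Uᴴ) k k) ^ 2 ≤ RCLike.re ((U * W * Uᴴ) k k) :=
        hUSU ▸ re_apply_sq_le_re_mul_conjTranspose_apply (U * S * Uᴴ) k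
    _ ≤ c := hW.re_conj_apply_le_of_eigenvalues_le hc hU' k

theorem PosSemidef.re_trace_pos {A : Matrix n n 𝕜} (hA : A.PosSemidef) (h : A ≠ 0) :
    0 < RCLike.re A.trace :=
  (RCLike.pos_iff.mp (hA.trace_nonneg.lt_of_ne (Ne.symm (hA.trace_eq_zero_iff.not.mpr h)))).1

end Matrix

theorem diag_sq_upper_bound_general
    (n : ℕ)
    (W : Matrix (Fin n) (Fin n) ℂ) (hW : W.PosDef) (htr : W.trace = 1)
    (lammax : ℝ) (hlam : lammax = ⨆ i, hW.posSemidef.isHermitian.eigenvalues i)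
    (q : Fin n → ℝ)
    (hq : ∀ k, q k = ((Matrix.PosSemidef.sqrt hW.posSemidef) k k).re / (Matrix.PosSemidef.sqrt hW.posSemidef).trace.re)
    (U : Matrix (Fin n) (Fin n) ℂ) (hU : Uᴴ * U = 1) (hU' : U * Uᴴ = 1) :
    ∑ k, ‖(U * (Matrix.PosSemidef.sqrt hW.posSemidef)) k k‖ ^ 2 ≤
      ((Matrix.PosSemidef.sqrt hW.posSemidef).trace.re) ^ 2 / n
        + Real.sqrt (n * lammax) * ∑ k, |q k - 1 / n| := by
  set S := hW.posSemidef.sqrt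
  have hS : S.PosSemidef := hW.posSemidef.posSemidef_sqrt
  have hSS : S * Sᴴ = W := by rw [hS.isHermitian.eq]; exact hW.posSemidef.sqrt_mul_self
  set t := S.trace.re
  set a : Fin n → ℝ := fun k => ((U * S * Uᴴ) k k).re
  have hlam_ge : ∀ i, hW.posSemidef.isHermitian.eigenvalues i ≤ lammax := fun i =>
    hlam ▸ le_ciSup (Set.finite_range _).bddAbove i
  have ha : ∀ k ∈ Finset.univ, 0 ≤ a k ∧ a k ≤ √lammax := fun k _ =>
    ⟨(Complex.nonneg_iff.mp (hS.mul_mul_conjTranspose_same U).diag_nonneg).1,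
      hW.posSemidef.isHermitian.re_conj_apply_le_sqrt hlam_ge hSS hU hU' k⟩
  have hsum_a : ∑ k, a k = t := by
    calc ∑ k, a k = (U * S * Uᴴ).trace.re := by simp [a, trace, Complex.re_sum]
      _ = t := by rw [trace_mul_cycle, hU, one_mul]
  have ht_pos : 0 < t := hS.re_trace_pos fun hS0 => by simp [← hSS, hS0] at htr
  have ht_le : t ≤ √n := Real.le_sqrt_of_sq_le <| by
    simpa [hSS, htr] using re_trace_sq_le_card_mul_re_trace_mul_conjTranspose S
  have hs : ∀ k, |(S k k).re - t / n| = t * |q k - 1 / n| := fun k => by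
    rw [hq k, ← abs_of_pos ht_pos, ← abs_mul, abs_of_pos ht_pos, mul_sub,
      mul_div_cancel₀ _ ht_pos.ne', mul_one_div]
  calc ∑ k, ‖(U * S) k k‖ ^ 2 ≤ ∑ k, a k * (S k k).re :=
        Finset.sum_le_sum fun k _ => hS.norm_mul_apply_self_sq_le U k
    _ ≤ (∑ k, a k) * (t / n) + √lammax * ∑ k, |(S k k).re - t / n| :=
        Finset.sum_mul_le_sum_mul_add_mul_sum_abs_sub _ _ _ _ ha
    _ = t ^ 2 / n + √lammax * t * ∑ k, |q k - 1 / n| := by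
        simp only [hsum_a, hs, ← Finset.mul_sum]; ring
    _ ≤ t ^ 2 / n + √(n * lammax) * ∑ k, |q k - 1 / n| := by
        rw [Real.sqrt_mul n.cast_nonneg, mul_comm √(n : ℝ)]
        gcongr

/-- for a positive definite `W` with `tr W = 1` and any unitary `U`,
`∑ₖ |(U √W)ₖₖ|² ≤ (tr √W)²/n + √(n λ_max) ∑ₖ |qₖ − 1/n|`. -/
theorem diag_sq_upper_bound
    (n : ℕ) (hn : 0 < n)
    (W : Matrix (Fin n) (Fin n) ℂ) (hW : W.PosDef) (htr : W.trace = 1)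
    (lammax : ℝ) (hlam : lammax = ⨆ i, hW.posSemidef.isHermitian.eigenvalues i)
    (q : Fin n → ℝ)
    (hq : ∀ k, q k = ((Matrix.PosSemidef.sqrt hW.posSemidef) k k).re / (Matrix.PosSemidef.sqrt hW.posSemidef).trace.re)
    (U : Matrix (Fin n) (Fin n) ℂ) (hU : Uᴴ * U = 1) (hU' : U * Uᴴ = 1) :
    ∑ k, ‖(U * (Matrix.PosSemidef.sqrt hW.posSemidef)) k k‖ ^ 2 ≤
      ((Matrix.PosSemidef.sqrt hW.posSemidef).trace.re) ^ 2 / n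
        + Real.sqrt (n * lammax) * ∑ k, |q k - 1 / n| :=
  diag_sq_upper_bound_general n W hW htr lammax hlam q hq U hU hU'
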